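/- arXiv:2403.12542 — 5 statements merged into one kernel-verified Lean document; each statement's English description precedes it below -/
import Mathlib

section
/- (Dynamics of the transformed internal-model state, equation (19).) Suppose ω: ℝ → ℝ³ is differentiable, η: ℝ → ℝⁿ is twice differentiable, u, d: ℝ → ℝ³ are continuous, and v, θ: ℝ → ℝ^r are differentiable, and that for all t: J dω/dt = −ω(t)^× J ω(t) + u(t) + d(t) − δ η̈(t); dv/dt = M v(t) + N u(t) + N F₀(ω(t)) − M N L₀(ω(t)); and dθ/dt = M θ(t) − N d(t). Then the function v̌(t) := v(t) − θ(t) − N δ η̇(t) − N J ω(t) satisfies, for all t, dv̌/dt = M v̌(t) + M N δ η̇(t) + (M N L₁(ω(t)) − N F₁(ω(t))) μ. -/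
open Matrix Filter Topology Set

noncomputable section

/-- The skew-symmetric matrix `ϖ^×` associated to `ϖ ∈ ℝ³`. -/
def skew3 (w : Fin 3 → ℝ) : Matrix (Fin 3) (Fin 3) ℝ :=
  !![0, -w 2, w 1; w 2, 0, -w 0; -w 1, w 0, 0]

/-- The matrix `L(x) ∈ ℝ^{3×6}` with `Jx = L(x)(J₁₁,J₂₂,J₃₃,J₂₃,J₁₃,J₁₂)ᵀ` for symmetric `J`. -/
def Lmat (x : Fin 3 → ℝ) : Matrix (Fin 3) (Fin 6) ℝ :=
  !![x 0, 0, 0, 0, x 2, x 1;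
     0, x 1, 0, x 2, 0, x 0;
     0, 0, x 2, x 1, x 0, 0]

/-- `L₁(x) = L(x) L̄₁`. -/
def L1m {nμ : ℕ} (Lb1 : Matrix (Fin 6) (Fin nμ) ℝ) (x : Fin 3 → ℝ) :
    Matrix (Fin 3) (Fin nμ) ℝ := Lmat x * Lb1

/-- `L₀(x) = L(x) L̄₀`. -/
def L0v (Lb0 : Fin 6 → ℝ) (x : Fin 3 → ℝ) : Fin 3 → ℝ := (Lmat x).mulVec Lb0

/-- `F₁(x) = −x^× L₁(x)`. -/
def F1m {nμ : ℕ} (Lb1 : Matrix (Fin 6) (Fin nμ) ℝ) (x : Fin 3 → ℝ) :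
    Matrix (Fin 3) (Fin nμ) ℝ := -(skew3 x) * L1m Lb1 x

/-- `F₀(x) = −x^× L₀(x)`. -/
def F0v (Lb0 : Fin 6 → ℝ) (x : Fin 3 → ℝ) : Fin 3 → ℝ := -((skew3 x).mulVec (L0v Lb0 x))

/-!
Differentiating `v̌` and substituting the three state equations, the inputs `u`, `d` and the
`δ η̈` terms cancel, leaving an expression in `J ω` and `-ω^× J ω`. Writing these through the
parametrization `J x = L₁(x) μ + L₀(x)`, `-x^× J x = F₁(x) μ + F₀(x)`, the `L₀`, `F₀` terms
cancel against those of the `v`-equation and only the `μ`-terms remain.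
-/

theorem HasDerivAt.const_mulVec {𝕜 : Type*} [NontriviallyNormedField 𝕜] {m k : Type*}
    [Fintype m] [Fintype k] (A : Matrix m k 𝕜) {f : 𝕜 → k → 𝕜} {f' : k → 𝕜} {t : 𝕜}
    (hf : HasDerivAt f f' t) : HasDerivAt (fun s => A *ᵥ f s) (A *ᵥ f') t := by
  rw [hasDerivAt_pi] at hf ⊢
  intro i
  simpa only [mulVec, dotProduct] using HasDerivAt.fun_sum fun j _ => (hf j).const_mul (A i j)

theorem Lmat_mulVec_of_isSymm {J : Matrix (Fin 3) (Fin 3) ℝ} (hJ : J.IsSymm) (x : Fin 3 → ℝ) :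
    Lmat x *ᵥ ![J 0 0, J 1 1, J 2 2, J 1 2, J 0 2, J 0 1] = J *ᵥ x := by
  ext i
  fin_cases i <;>
    simp [Lmat, mulVec, dotProduct, Fin.sum_univ_succ, hJ.apply 0 1, hJ.apply 0 2,
      hJ.apply 1 2] <;> ring

section InertiaParametrization

variable {nμ : ℕ} {J : Matrix (Fin 3) (Fin 3) ℝ} {Lb1 : Matrix (Fin 6) (Fin nμ) ℝ}
  {Lb0 : Fin 6 → ℝ} {μ : Fin nμ → ℝ}

theorem mulVec_eq_L1m_add_L0v (hJ : J.IsSymm)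
    (hJdec : (![J 0 0, J 1 1, J 2 2, J 1 2, J 0 2, J 0 1] : Fin 6 → ℝ) = Lb1 *ᵥ μ + Lb0)
    (x : Fin 3 → ℝ) : J *ᵥ x = L1m Lb1 x *ᵥ μ + L0v Lb0 x := by
  rw [← Lmat_mulVec_of_isSymm hJ, hJdec, mulVec_add, L1m, L0v, mulVec_mulVec]

theorem neg_skew3_mulVec_eq_F1m_add_F0v (hJ : J.IsSymm)
    (hJdec : (![J 0 0, J 1 1, J 2 2, J 1 2, J 0 2, J 0 1] : Fin 6 → ℝ) = Lb1 *ᵥ μ + Lb0)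
    (x : Fin 3 → ℝ) : -(skew3 x *ᵥ (J *ᵥ x)) = F1m Lb1 x *ᵥ μ + F0v Lb0 x := by
  rw [mulVec_eq_L1m_add_L0v hJ hJdec, F1m, F0v, mulVec_add, ← mulVec_mulVec, neg_mulVec,
    neg_add]

end InertiaParametrization

theorem stmt_4_general {n nμ r : ℕ}
    (J : Matrix (Fin 3) (Fin 3) ℝ) (hJs : J.IsSymm)
    (Lb1 : Matrix (Fin 6) (Fin nμ) ℝ) (Lb0 : Fin 6 → ℝ) (μ : Fin nμ → ℝ)
    (hJdec : (![J 0 0, J 1 1, J 2 2, J 1 2, J 0 2, J 0 1] : Fin 6 → ℝ) = Lb1.mulVec μ + Lb0)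
    (δ : Matrix (Fin 3) (Fin n) ℝ)
    (M : Matrix (Fin r) (Fin r) ℝ) (N : Matrix (Fin r) (Fin 3) ℝ)
    (ω ω' : ℝ → Fin 3 → ℝ) (ηd ηdd : ℝ → Fin n → ℝ) (u d : ℝ → Fin 3 → ℝ)
    (v θ : ℝ → Fin r → ℝ)
    (hω : ∀ t, HasDerivAt ω (ω' t) t)
    (hηd : ∀ t, HasDerivAt ηd (ηdd t) t)
    (hdyn : ∀ t, J.mulVec (ω' t) =
      -((skew3 (ω t)).mulVec (J.mulVec (ω t))) + u t + d t - δ.mulVec (ηdd t))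
    (hv : ∀ t, HasDerivAt v
      (M.mulVec (v t) + N.mulVec (u t) + N.mulVec (F0v Lb0 (ω t))
        - (M * N).mulVec (L0v Lb0 (ω t))) t)
    (hθ : ∀ t, HasDerivAt θ (M.mulVec (θ t) - N.mulVec (d t)) t) :
    ∀ t, HasDerivAt
      (fun s => v s - θ s - (N * δ).mulVec (ηd s) - N.mulVec (J.mulVec (ω s)))
      (M.mulVec (v t - θ t - (N * δ).mulVec (ηd t) - N.mulVec (J.mulVec (ω t)))
        + (M * N * δ).mulVec (ηd t)
        + (M * N * L1m Lb1 (ω t) - N * F1m Lb1 (ω t)).mulVec μ) t := by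
  intro t
  have hJω : HasDerivAt (fun s => N *ᵥ (J *ᵥ ω s)) (N *ᵥ (J *ᵥ ω' t)) t :=
    ((hω t).const_mulVec J).const_mulVec N
  have hderiv := (((hv t).sub (hθ t)).sub ((hηd t).const_mulVec (N * δ))).sub hJω
  refine hderiv.congr_deriv ?_
  rw [hdyn t, neg_skew3_mulVec_eq_F1m_add_F0v hJs hJdec, mulVec_eq_L1m_add_L0v hJs hJdec]
  simp only [mulVec_add, mulVec_sub, sub_mulVec, ← mulVec_mulVec]
  abel

/-- Dynamics of the transformed internal-model state, equation (19):
`v̌ = v − θ − Nδη̇ − NJω` satisfies `dv̌/dt = Mv̌ + MNδη̇ + (MNL₁(ω) − NF₁(ω))μ`. -/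
theorem stmt_4 {n nμ r : ℕ} (hn : 0 < n) (hnμ : 0 < nμ) (hr : 0 < r)
    (J : Matrix (Fin 3) (Fin 3) ℝ) (hJs : J.IsSymm)
    (Lb1 : Matrix (Fin 6) (Fin nμ) ℝ) (Lb0 : Fin 6 → ℝ) (μ : Fin nμ → ℝ)
    (hJdec : (![J 0 0, J 1 1, J 2 2, J 1 2, J 0 2, J 0 1] : Fin 6 → ℝ) = Lb1.mulVec μ + Lb0)
    (δ : Matrix (Fin 3) (Fin n) ℝ)
    (M : Matrix (Fin r) (Fin r) ℝ) (N : Matrix (Fin r) (Fin 3) ℝ)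
    (ω ω' : ℝ → Fin 3 → ℝ) (η ηd ηdd : ℝ → Fin n → ℝ) (u d : ℝ → Fin 3 → ℝ)
    (v θ : ℝ → Fin r → ℝ)
    (hω : ∀ t, HasDerivAt ω (ω' t) t)
    (hη : ∀ t, HasDerivAt η (ηd t) t)
    (hηd : ∀ t, HasDerivAt ηd (ηdd t) t)
    (huc : Continuous u) (hdc : Continuous d)
    (hdyn : ∀ t, J.mulVec (ω' t) =
      -((skew3 (ω t)).mulVec (J.mulVec (ω t))) + u t + d t - δ.mulVec (ηdd t))
    (hv : ∀ t, HasDerivAt v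
      (M.mulVec (v t) + N.mulVec (u t) + N.mulVec (F0v Lb0 (ω t))
        - (M * N).mulVec (L0v Lb0 (ω t))) t)
    (hθ : ∀ t, HasDerivAt θ (M.mulVec (θ t) - N.mulVec (d t)) t) :
    ∀ t, HasDerivAt
      (fun s => v s - θ s - (N * δ).mulVec (ηd s) - N.mulVec (J.mulVec (ω s)))
      (M.mulVec (v t - θ t - (N * δ).mulVec (ηd t) - N.mulVec (J.mulVec (ω t)))
        + (M * N * δ).mulVec (ηd t)
        + (M * N * L1m Lb1 (ω t) - N * F1m Lb1 (ω t)).mulVec μ) t :=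
  stmt_4_general J hJs Lb1 Lb0 μ hJdec δ M N ω ω' ηd ηdd u d v θ hω hηd hdyn hv hθ

end
end

section
/- (Hurwitz property of the modal matrix A.) Let C, K ∈ ℝ^{n×n} be symmetric positive definite matrices, and let A ∈ ℝ^{2n×2n} be the block matrix A = [[0, I_n], [−K, −C]]. Then A is Hurwitz: every eigenvalue of A, viewed as a matrix over ℂ, has negative real part. -/
/-!
If `z` is an eigenvalue of `A = [[0, I], [−K, −C]]` with eigenvector `(x, y)`, then `y = z x` and
`z² x + z C x + K x = 0` with `x ≠ 0`. Pairing with `x*` gives `s z² + c z + k = 0` where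
`s = x* x`, `c = x* C x` and `k = x* K x` are positive reals, and every root of such a quadratic
has negative real part.
-/

open Matrix Filter Topology Set

/-- A real square matrix is Hurwitz if every eigenvalue of it, viewed as a matrix over `ℂ`
(equivalently, every complex root of its characteristic polynomial), has negative real part. -/
def IsHurwitz {m : Type*} [Fintype m] [DecidableEq m] (M : Matrix m m ℝ) : Prop :=
  ∀ z : ℂ, ((M.map Complex.ofReal).charpoly).IsRoot z → z.re < 0

open scoped ComplexOrder MatrixOrder

theorem Complex.re_neg_of_quadratic_eq_zero {a b c z : ℂ} (ha : 0 < a) (hb : 0 < b)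
    (hc : 0 < c) (h : a * z ^ 2 + b * z + c = 0) : z.re < 0 := by
  rw [Complex.pos_iff] at ha hb hc
  have hre := congrArg Complex.re h
  have him := congrArg Complex.im h
  simp only [Complex.add_re, Complex.add_im, Complex.mul_re, Complex.mul_im, pow_two,
    ← ha.2, ← hb.2, ← hc.2, Complex.zero_re, Complex.zero_im] at hre him
  by_contra! hz
  -- for `re z ≥ 0` the imaginary part `im z * (2 a re z + b)` vanishes only if `z` is real
  have hzim : z.im = 0 := by
    have : z.im * (2 * a.re * z.re + b.re) = 0 := by linarith
    exact (mul_eq_zero.mp this).resolve_right (by nlinarith)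
  rw [hzim] at hre
  nlinarith [mul_nonneg ha.1.le (mul_nonneg hz hz), mul_nonneg hb.1.le hz]

namespace Matrix

/- Writing `M = Bᵀ B`, the complexification of `M` is `B'ᴴ B'`, which is positive semidefinite,
and it is invertible because `det M ≠ 0`. -/
theorem PosDef.map_ofReal {n : Type*} [Fintype n] [DecidableEq n] {M : Matrix n n ℝ}
    (hM : M.PosDef) : (M.map Complex.ofReal).PosDef := by
  obtain ⟨B, rfl⟩ := CStarAlgebra.nonneg_iff_eq_star_mul_self.mp hM.posSemidef.nonneg
  have hmap : (star B * B).map Complex.ofReal =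
      (B.map Complex.ofReal)ᴴ * B.map Complex.ofReal := by
    rw [star_eq_conjTranspose, ← conjTranspose_map _ fun r => (Complex.conj_ofReal r).symm]
    exact Matrix.map_mul (f := Complex.ofRealHom)
  rw [hmap, (posSemidef_conjTranspose_mul_self _).posDef_iff_det_ne_zero, ← hmap]
  have hdet := (Complex.ofRealHom.map_det (star B * B)).symm
  exact hdet ▸ Complex.ofReal_ne_zero.mpr hM.det_pos.ne'

theorem exists_quadratic_eigenvector_of_hasEigenvalue_fromBlocks {m R : Type*} [Fintype m]
    [DecidableEq m] [CommRing R] {C K : Matrix m m R} {z : R}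
    (h : Module.End.HasEigenvalue (toLin' (fromBlocks 0 1 (-K) (-C))) z) :
    ∃ x ≠ 0, z ^ 2 • x + z • C *ᵥ x + K *ᵥ x = 0 := by
  obtain ⟨v, hv⟩ := h.exists_hasEigenvector
  have heq := hv.apply_eq_smul
  rw [toLin'_apply, fromBlocks_mulVec] at heq
  have hfirst : v ∘ Sum.inr = z • (v ∘ Sum.inl) := by
    funext i; simpa using congrFun heq (Sum.inl i)
  have hsecond : -(K *ᵥ (v ∘ Sum.inl)) - C *ᵥ (v ∘ Sum.inr) = z • (v ∘ Sum.inr) := by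
    funext i; simpa [sub_eq_add_neg, neg_mulVec] using congrFun heq (Sum.inr i)
  refine ⟨v ∘ Sum.inl, fun hzero => hv.2 ?_, ?_⟩
  · have hzero' : v ∘ Sum.inr = 0 := by rw [hfirst, hzero, smul_zero]
    funext i
    cases i with
    | inl i => exact congrFun hzero i
    | inr i => exact congrFun hzero' i
  · rw [hfirst, mulVec_smul, smul_smul, ← sq] at hsecond
    rw [← neg_eq_zero, ← hsecond]
    abel

theorem re_neg_of_quadratic_eigenvector {n : Type*} [Fintype n] {C K : Matrix n n ℂ}
    (hC : C.PosDef) (hK : K.PosDef) {z : ℂ} {x : n → ℂ} (hx : x ≠ 0)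
    (h : z ^ 2 • x + z • C *ᵥ x + K *ᵥ x = 0) : z.re < 0 := by
  have hform := congrArg (star x ⬝ᵥ ·) h
  simp only [dotProduct_add, dotProduct_smul, smul_eq_mul, dotProduct_zero] at hform
  exact Complex.re_neg_of_quadratic_eq_zero (dotProduct_star_self_pos_iff.mpr hx)
    (hC.dotProduct_mulVec_pos hx) (hK.dotProduct_mulVec_pos hx) (by linear_combination hform)

end Matrix

theorem stmt_6_general {n : ℕ} (C K : Matrix (Fin n) (Fin n) ℝ)
    (hCpd : C.PosDef) (hKpd : K.PosDef) :
    IsHurwitz (Matrix.fromBlocks (0 : Matrix (Fin n) (Fin n) ℝ) (1 : Matrix (Fin n) (Fin n) ℝ)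
      (-K) (-C)) := by
  intro z hz
  rw [← charpoly_toLin', ← Module.End.hasEigenvalue_iff_isRoot_charpoly] at hz
  simp only [fromBlocks_map, Matrix.map_zero _ Complex.ofReal_zero,
    Matrix.map_one _ Complex.ofReal_zero Complex.ofReal_one,
    Matrix.map_neg _ Complex.ofReal_neg] at hz
  obtain ⟨x, hx, hquad⟩ := exists_quadratic_eigenvector_of_hasEigenvalue_fromBlocks hz
  exact re_neg_of_quadratic_eigenvector hCpd.map_ofReal hKpd.map_ofReal hx hquad

/-- Hurwitz property of the modal matrix `A = [[0, I], [−K, −C]]` for symmetric positive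
definite `C, K`. -/
theorem stmt_6 {n : ℕ} (hn : 0 < n) (C K : Matrix (Fin n) (Fin n) ℝ)
    (hCs : C.IsSymm) (hCpd : C.PosDef) (hKs : K.IsSymm) (hKpd : K.PosDef) :
    IsHurwitz (Matrix.fromBlocks (0 : Matrix (Fin n) (Fin n) ℝ) (1 : Matrix (Fin n) (Fin n) ℝ)
      (-K) (-C)) :=
  stmt_6_general C K hCpd hKpd
end

section
/- (Solvability of the Lyapunov equation for Hurwitz matrices.) Let M ∈ ℝ^{r×r} be Hurwitz. Then for every s > 0 there exists a symmetric positive definite matrix S ∈ ℝ^{r×r} such that S M + Mᵀ S = −s I_r. -/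
open Matrix Filter Topology Set

/-!
Deform `M` to `-1` along `A t = (1 - t) • M - t • 1`, `t ∈ [0, 1]`; every `A t` is Hurwitz.
For a Hurwitz matrix `A` the Lyapunov operator `X ↦ X A + Aᵀ X` is injective (Sylvester:
the spectra of `A` and `-Aᵀ` are disjoint), so `S t A t + (A t)ᵀ S t = -Q` has a unique
solution `S t`, which is symmetric and depends continuously on `t`. It is never singular,
since `S x = 0` forces `xᵀ Q x = 0`. Hence the set of `t` where `S t` is positive definite is
open and closed in `[0, 1]`, and it contains `1` because `S 1 = Q / 2`.
-/

open Polynomial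

namespace Matrix

section Sylvester

variable {K : Type*} [Field K] {m n : Type*} [Fintype m] [Fintype n] [DecidableEq m]
  [DecidableEq n]

theorem mul_aeval_eq_aeval_mul {A : Matrix n n K} {B : Matrix m m K} {X : Matrix m n K}
    (h : X * A = B * X) (p : K[X]) : X * aeval A p = aeval B p * X := by
  have hpow (k : ℕ) : X * A ^ k = B ^ k * X := by
    induction k with
    | zero => simp
    | succ k ih => rw [pow_succ, pow_succ, ← Matrix.mul_assoc, ih, Matrix.mul_assoc, h,
        ← Matrix.mul_assoc]
  simp only [aeval_eq_sum_range, Matrix.mul_sum, Matrix.sum_mul, Matrix.mul_smul, Matrix.smul_mul,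
    hpow]

/-- By Cayley–Hamilton `χ_A(A) = 0`, while `χ_A(B)` is invertible by the spectral mapping
theorem. -/
theorem eq_zero_of_mul_eq_mul_of_disjoint_spectrum [IsAlgClosed K] {A : Matrix n n K}
    {B : Matrix m m K} (hAB : Disjoint (spectrum K A) (spectrum K B)) {X : Matrix m n K}
    (h : X * A = B * X) : X = 0 := by
  rcases isEmpty_or_nonempty n with _ | _
  · exact Subsingleton.elim _ _
  have hunit : IsUnit (aeval B A.charpoly) := by
    rw [← spectrum.zero_notMem_iff K, spectrum.map_polynomial_aeval_of_degree_pos B _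
      (by rw [charpoly_degree_eq_dim]; exact_mod_cast Fintype.card_pos)]
    rintro ⟨μ, hμB, hμ⟩
    exact hAB.notMem_of_mem_right hμB (mem_spectrum_iff_isRoot_charpoly.mpr hμ)
  have hX := mul_aeval_eq_aeval_mul h A.charpoly
  rw [aeval_self_charpoly, Matrix.mul_zero] at hX
  calc X = ((aeval B A.charpoly)⁻¹ * aeval B A.charpoly) * X := by
        rw [nonsing_inv_mul _ ((isUnit_iff_isUnit_det _).mp hunit), Matrix.one_mul]
    _ = 0 := by rw [Matrix.mul_assoc, ← hX, Matrix.mul_zero]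

end Sylvester

variable {n : Type*} [Fintype n]

theorem PosDef.eventually_dotProduct_mulVec_pos {A : Matrix n n ℝ} (hA : A.PosDef) :
    ∀ᶠ B in 𝓝 A, ∀ x ≠ 0, 0 < x ⬝ᵥ B *ᵥ x := by
  have hquad : Continuous fun p : Matrix n n ℝ × (n → ℝ) => p.2 ⬝ᵥ p.1 *ᵥ p.2 := by fun_prop
  have hsphere : ∀ᶠ B in 𝓝 A, ∀ y ∈ Metric.sphere (0 : n → ℝ) 1, 0 < y ⬝ᵥ B *ᵥ y :=
    (isCompact_sphere 0 1).eventually_forall_of_forall_eventually fun y hy =>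
      hquad.continuousAt.eventually (lt_mem_nhds (by
        simpa using hA.dotProduct_mulVec_pos (ne_zero_of_mem_unit_sphere ⟨y, hy⟩)))
  filter_upwards [hsphere] with B hB x hx
  have hy : ‖x‖⁻¹ • x ∈ Metric.sphere (0 : n → ℝ) 1 := by
    simpa using norm_smul_inv_norm (𝕜 := ℝ) hx
  have hxy : x ⬝ᵥ B *ᵥ x = ‖x‖ ^ 2 * ((‖x‖⁻¹ • x) ⬝ᵥ B *ᵥ (‖x‖⁻¹ • x)) := by
    simp only [mulVec_smul, smul_dotProduct, dotProduct_smul, smul_eq_mul]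
    field_simp [norm_ne_zero_iff.mpr hx]
  rw [hxy]
  exact mul_pos (by positivity) (hB _ hy)

theorem posDef_of_continuous_of_isUnit [DecidableEq n] {X : Type*} [TopologicalSpace X]
    [PreconnectedSpace X] {S : X → Matrix n n ℝ} (hS : Continuous S)
    (hherm : ∀ x, (S x).IsHermitian) (hunit : ∀ x, IsUnit (S x)) {x₀ : X} (h₀ : (S x₀).PosDef)
    (x : X) : (S x).PosDef := by
  have hclosed : IsClosed {x | (S x).PosDef} := by
    have : {x | (S x).PosDef} = ⋂ v : n → ℝ, {x | 0 ≤ v ⬝ᵥ S x *ᵥ v} := by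
      ext x
      have hpsd : (S x).PosSemidef ↔ ∀ v : n → ℝ, 0 ≤ v ⬝ᵥ S x *ᵥ v := by
        simp only [posSemidef_iff_dotProduct_mulVec, and_iff_right (hherm x), star_trivial]
      simp only [mem_ofPred_eq, mem_iInter, ← hpsd]
      exact ⟨PosDef.posSemidef, fun h => h.posDef_iff_isUnit.mpr (hunit x)⟩
    rw [this]
    exact isClosed_iInter fun v => isClosed_le continuous_const (by fun_prop)
  have hopen : IsOpen {x | (S x).PosDef} := by
    refine isOpen_iff_mem_nhds.mpr fun x hx => ?_
    filter_upwards [hS.continuousAt.eventually hx.eventually_dotProduct_mulVec_pos] with y hy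
    exact posDef_iff_dotProduct_mulVec.mpr ⟨hherm y, by simpa using hy⟩
  exact (IsClopen.eq_univ ⟨hclosed, hopen⟩ ⟨x₀, h₀⟩).ge (mem_univ x)

end Matrix

theorem exists_continuous_forall_apply_eq {𝕜 X E : Type*} [NontriviallyNormedField 𝕜]
    [CompleteSpace 𝕜] [TopologicalSpace X] [NormedAddCommGroup E] [NormedSpace 𝕜 E]
    [FiniteDimensional 𝕜 E] {L : X → E →L[𝕜] E} (hL : Continuous L)
    (hinj : ∀ x, Function.Injective (L x)) (v : E) :
    ∃ S : X → E, Continuous S ∧ ∀ x, L x (S x) = v := by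
  have : CompleteSpace E := FiniteDimensional.complete 𝕜 E
  have hunit (x : X) : IsUnit (L x) :=
    ⟨(LinearEquiv.ofInjectiveEndo _ (hinj x)).toContinuousLinearEquiv.toUnit, rfl⟩
  refine ⟨fun x => Ring.inverse (L x) v, ?_, fun x => ?_⟩
  · refine Continuous.clm_apply (continuous_iff_continuousAt.mpr fun x => ?_) continuous_const
    have := NormedRing.inverse_continuousAt (hunit x).unit
    rw [IsUnit.unit_spec] at this
    exact this.comp hL.continuousAt
  · change (L x * Ring.inverse (L x)) v = v
    rw [Ring.mul_inverse_cancel _ (hunit x)]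
    rfl

section lyapunovMap

variable {n R : Type*} [Fintype n] [CommRing R]

def lyapunovMap (A : Matrix n n R) : Matrix n n R →ₗ[R] Matrix n n R :=
  LinearMap.mulRight R A + LinearMap.mulLeft R Aᵀ

@[simp]
theorem lyapunovMap_apply (A X : Matrix n n R) : lyapunovMap A X = X * A + Aᵀ * X := rfl

theorem lyapunovMap_transpose (A X : Matrix n n R) : lyapunovMap A Xᵀ = (lyapunovMap A X)ᵀ := by
  simp [add_comm]

theorem lyapunovMap_smul_sub_smul_one [DecidableEq n] (A : Matrix n n R) (c d : R) :
    lyapunovMap (c • A - d • 1) = c • lyapunovMap A - (2 * d) • LinearMap.id := by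
  ext1 X
  simp only [lyapunovMap_apply, LinearMap.sub_apply, LinearMap.smul_apply, LinearMap.id_apply,
    transpose_sub, transpose_smul, transpose_one, Matrix.mul_sub, Matrix.sub_mul, Matrix.mul_smul,
    Matrix.smul_mul, Matrix.mul_one, Matrix.one_mul]
  module

theorem Matrix.IsSymm.isUnit_of_lyapunovMap_eq_neg [DecidableEq n] {S A Q : Matrix n n ℝ}
    (hS : S.IsSymm) (hQ : Q.PosDef) (h : lyapunovMap A S = -Q) : IsUnit S := by
  rw [isUnit_iff_isUnit_det, isUnit_iff_ne_zero, Ne, ← exists_mulVec_eq_zero_iff]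
  rintro ⟨x, hx, hSx⟩
  have hxS : x ᵥ* S = 0 := by rw [← mulVec_transpose, hS.eq, hSx]
  have hQx : x ⬝ᵥ Q *ᵥ x = 0 := by
    rw [← neg_neg Q, ← h, lyapunovMap_apply, neg_mulVec, dotProduct_neg, add_mulVec,
      dotProduct_add, ← mulVec_mulVec, ← mulVec_mulVec, dotProduct_mulVec, hxS, hSx]
    simp
  exact (hQ.dotProduct_mulVec_pos hx).ne' (by simpa using hQx)

end lyapunovMap

variable {n : Type*} [Fintype n] [DecidableEq n]

theorem isHurwitz_iff_re_neg {M : Matrix n n ℝ} :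
    IsHurwitz M ↔ ∀ z ∈ spectrum ℂ (M.map Complex.ofReal), z.re < 0 := by
  simp only [IsHurwitz, mem_spectrum_iff_isRoot_charpoly]

namespace IsHurwitz

variable {M : Matrix n n ℝ}

theorem re_neg (hM : IsHurwitz M) {z : ℂ} (hz : z ∈ spectrum ℂ (M.map Complex.ofReal)) :
    z.re < 0 :=
  isHurwitz_iff_re_neg.mp hM z hz

theorem smul_sub_smul_one (hM : IsHurwitz M) {c d : ℝ} (hc : 0 ≤ c) (hd : 0 ≤ d)
    (hcd : 0 < c + d) : IsHurwitz (c • M - d • 1) := by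
  rw [isHurwitz_iff_re_neg]
  intro z hz
  have hmap : (c • M - d • 1).map Complex.ofReal =
      -algebraMap ℂ _ d + (c : ℂ) • M.map Complex.ofReal := by
    ext i j
    rcases eq_or_ne i j with rfl | hij <;> simp [algebraMap_matrix_apply, *, sub_eq_neg_add]
  rw [hmap, ← spectrum.add_mem_iff] at hz
  rcases hc.eq_or_lt with rfl | hc
  · have hzd : z + d = 0 := by
      by_contra h
      refine spectrum.mem_iff.mp hz ?_
      simpa using (Ne.isUnit h).map (algebraMap ℂ (Matrix n n ℂ))
    have := congrArg Complex.re hzd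
    simp only [Complex.add_re, Complex.ofReal_re, Complex.zero_re] at this
    linarith
  · have hcC : (c : ℂ) ≠ 0 := by exact_mod_cast hc.ne'
    have hw : (z + d) / c ∈ spectrum ℂ (M.map Complex.ofReal) := by
      rw [← spectrum.smul_mem_smul_iff (r := Units.mk0 _ hcC)]
      simpa [mul_div_cancel₀ _ hcC] using hz
    have := hM.re_neg hw
    rw [Complex.div_ofReal_re, div_neg_iff] at this
    simp only [Complex.add_re, Complex.ofReal_re] at this
    rcases this with h | h <;> linarith [h.1, h.2]

theorem lyapunovMap_injective (hM : IsHurwitz M) : Function.Injective (lyapunovMap M) := by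
  rw [← LinearMap.ker_eq_bot, LinearMap.ker_eq_bot']
  intro X hX
  have hC : X.map Complex.ofReal * M.map Complex.ofReal =
      -(M.map Complex.ofReal)ᵀ * X.map Complex.ofReal := by
    have := congrArg Complex.ofRealHom.mapMatrix hX
    simp only [lyapunovMap_apply, map_add, map_mul, map_zero, RingHom.mapMatrix_apply,
      transpose_map] at this
    rw [Matrix.neg_mul, eq_neg_iff_add_eq_zero]
    exact this
  have hdisj : Disjoint (spectrum ℂ (M.map Complex.ofReal))
      (spectrum ℂ (-(M.map Complex.ofReal)ᵀ)) := by
    rw [← spectrum.neg_eq, Set.disjoint_left]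
    intro z hz hz'
    have hz'' : -z ∈ spectrum ℂ (M.map Complex.ofReal) := by
      simpa [mem_spectrum_iff_isRoot_charpoly, charpoly_transpose] using hz'
    linarith [hM.re_neg hz, hM.re_neg hz'', Complex.neg_re z]
  exact Matrix.map_injective Complex.ofReal_injective
    (by simpa using eq_zero_of_mul_eq_mul_of_disjoint_spectrum hdisj hC)

section

-- Any norm will do: it only serves to make `Matrix n n ℝ →L[ℝ] Matrix n n ℝ` a normed ring.
attribute [local instance] Matrix.normedAddCommGroup Matrix.normedSpace

theorem exists_isSymm_posDef_lyapunovMap_eq_neg (hM : IsHurwitz M) {Q : Matrix n n ℝ}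
    (hQ : Q.PosDef) : ∃ S : Matrix n n ℝ, S.IsSymm ∧ S.PosDef ∧ lyapunovMap M S = -Q := by
  let A (t : unitInterval) : Matrix n n ℝ := (1 - t : ℝ) • M - (t : ℝ) • 1
  have hA (t : unitInterval) : IsHurwitz (A t) :=
    hM.smul_sub_smul_one (unitInterval.one_minus_nonneg t) t.2.1 (by simp)
  let L (t : unitInterval) := LinearMap.toContinuousLinearMap (lyapunovMap (A t))
  have hL : Continuous L := by
    have : L = fun t : unitInterval => (1 - t : ℝ) • LinearMap.toContinuousLinearMap
        (lyapunovMap M) - (2 * t : ℝ) • ContinuousLinearMap.id ℝ _ := by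
      ext1 t
      simp only [L, A, lyapunovMap_smul_sub_smul_one, map_sub, map_smul]
      rfl
    rw [this]
    fun_prop
  obtain ⟨S, hSc, hS⟩ :=
    exists_continuous_forall_apply_eq hL (fun t => (hA t).lyapunovMap_injective) (-Q)
  replace hS (t : unitInterval) : lyapunovMap (A t) (S t) = -Q := hS t
  have hsymm (t : unitInterval) : (S t).IsSymm :=
    (hA t).lyapunovMap_injective (by
      rw [lyapunovMap_transpose, hS t, transpose_neg,
        (isHermitian_iff_isSymm.mp hQ.isHermitian).eq])
  have hS1 : S 1 = (1 / 2 : ℝ) • Q := (hA 1).lyapunovMap_injective (by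
    rw [hS 1, show A 1 = -1 by simp [A], lyapunovMap_apply]
    simp only [transpose_neg, transpose_one, Matrix.mul_neg, Matrix.neg_mul, Matrix.mul_one,
      Matrix.one_mul]
    module)
  have hPD := posDef_of_continuous_of_isUnit hSc (fun t => isHermitian_iff_isSymm.mpr (hsymm t))
    (fun t => (hsymm t).isUnit_of_lyapunovMap_eq_neg hQ (hS t)) (x₀ := 1)
    (by rw [hS1]; exact hQ.smul (by norm_num)) 0
  exact ⟨S 0, hsymm 0, hPD, by simpa [A] using hS 0⟩

end

end IsHurwitz

theorem stmt_7_general {r : ℕ} (M : Matrix (Fin r) (Fin r) ℝ) (hM : IsHurwitz M) :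
    ∀ s : ℝ, 0 < s → ∃ S : Matrix (Fin r) (Fin r) ℝ, S.IsSymm ∧ S.PosDef ∧
      S * M + Mᵀ * S = -(s • (1 : Matrix (Fin r) (Fin r) ℝ)) := fun _ hs =>
  hM.exists_isSymm_posDef_lyapunovMap_eq_neg (PosDef.one.smul hs)

/-- Solvability of the Lyapunov equation `SM + MᵀS = −sI` for Hurwitz matrices. -/
theorem stmt_7 {r : ℕ} (hr : 0 < r) (M : Matrix (Fin r) (Fin r) ℝ) (hM : IsHurwitz M) :
    ∀ s : ℝ, 0 < s → ∃ S : Matrix (Fin r) (Fin r) ℝ, S.IsSymm ∧ S.PosDef ∧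
      S * M + Mᵀ * S = -(s • (1 : Matrix (Fin r) (Fin r) ℝ)) :=
  stmt_7_general M hM
end

section
/- (Nonsingularity of the Sylvester solution under controllability and observability.) Let Φ, M ∈ ℝ^{r×r} have no common eigenvalue over ℂ, let N ∈ ℝ^{r×1} be such that the pair (M, N) is controllable, i.e. the matrix [N, MN, M²N, …, M^{r−1}N] ∈ ℝ^{r×r} is invertible, and let Ψ ∈ ℝ^{1×r} be such that the pair (Φ, Ψ) is observable, i.e. the matrix with rows Ψ, ΨΦ, ΨΦ², …, ΨΦ^{r−1} is invertible. Then the unique solution T ∈ ℝ^{r×r} of the Sylvester equation T Φ − M T = N Ψ is nonsingular. -/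
open Matrix Filter Topology Set

private lemma aux_reindex {A : Type*} [AddCommMonoid A] (r : ℕ) (g : ℕ → ℕ → A)
    (hg : ∀ i j, r < i + j + 1 → g i j = 0) :
    ∑ k ∈ Finset.range (r + 1), ∑ i ∈ Finset.range k, g i (k - 1 - i)
      = ∑ i ∈ Finset.range r, ∑ j ∈ Finset.range r, g i j := by
  classical
  have h1 : ∑ k ∈ Finset.range (r + 1), ∑ i ∈ Finset.range k, g i (k - 1 - i)
      = ∑ p ∈ (Finset.range (r + 1)).sigma (fun k => Finset.range k), g p.2 (p.1 - 1 - p.2) :=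
    Finset.sum_sigma' _ _ _
  have h2 : ∑ p ∈ (Finset.range (r + 1)).sigma (fun k => Finset.range k), g p.2 (p.1 - 1 - p.2)
      = ∑ p ∈ ((Finset.range r ×ˢ Finset.range r).filter (fun p => p.1 + p.2 + 1 ≤ r)),
        g p.1 p.2 := by
    refine Finset.sum_bij' (fun q _ => ((q.2, q.1 - 1 - q.2) : ℕ × ℕ))
      (fun p _ => (⟨p.1 + p.2 + 1, p.1⟩ : Σ _ : ℕ, ℕ)) ?_ ?_ ?_ ?_ ?_
    · rintro ⟨k, i⟩ hq
      simp only [Finset.mem_sigma, Finset.mem_range] at hq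
      simp only [Finset.mem_filter, Finset.mem_product, Finset.mem_range]
      omega
    · rintro ⟨i, j⟩ hp
      simp only [Finset.mem_filter, Finset.mem_product, Finset.mem_range] at hp
      simp only [Finset.mem_sigma, Finset.mem_range]
      omega
    · rintro ⟨k, i⟩ hq
      simp only [Finset.mem_sigma, Finset.mem_range] at hq
      have hk : i + (k - 1 - i) + 1 = k := by omega
      simp only [hk]
    · rintro ⟨i, j⟩ hp
      simp only [Finset.mem_filter, Finset.mem_product, Finset.mem_range] at hp
      have : i + j + 1 - 1 - i = j := by omega
      simp only [this]
    · rintro ⟨k, i⟩ _; rfl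
  have h3 : ∑ p ∈ ((Finset.range r ×ˢ Finset.range r).filter (fun p => p.1 + p.2 + 1 ≤ r)),
      g p.1 p.2 = ∑ p ∈ Finset.range r ×ˢ Finset.range r, g p.1 p.2 := by
    refine Finset.sum_subset (Finset.filter_subset _ _) ?_
    rintro ⟨i, j⟩ hp hnp
    simp only [Finset.mem_filter, Finset.mem_product, Finset.mem_range] at hp hnp
    exact hg i j (by omega)
  rw [h1, h2, h3, Finset.sum_product]

private lemma aux_eval_charpoly {n : Type*} [Fintype n] [DecidableEq n] {R : Type*} [CommRing R]
    (A : Matrix n n R) (t : R) :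
    A.charpoly.eval t = (t • (1 : Matrix n n R) - A).det := by
  rw [Matrix.charpoly, ← Polynomial.coe_evalRingHom, RingHom.map_det]
  congr 1
  ext i j
  by_cases h : i = j
  · subst h
    simp [Matrix.charmatrix_apply_eq, Matrix.sub_apply, Matrix.smul_apply, Matrix.one_apply]
  · simp [Matrix.charmatrix_apply_ne _ _ _ h, Matrix.sub_apply, Matrix.smul_apply,
      Matrix.one_apply_ne h]

private lemma aux_aeval_map {n : Type*} [Fintype n] [DecidableEq n]
    {R S : Type*} [CommRing R] [CommRing S] (f : R →+* S) (p : Polynomial R)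
    (A : Matrix n n R) :
    (Polynomial.aeval A p).map f = Polynomial.aeval (A.map f) (p.map f) := by
  have hmap : (Polynomial.aeval A p).map f = f.mapMatrix (Polynomial.aeval A p) := rfl
  rw [hmap, Polynomial.aeval_def, Polynomial.aeval_def, Polynomial.eval₂_map,
    Polynomial.hom_eval₂]
  have hcomp : f.mapMatrix.comp (algebraMap R (Matrix n n R))
      = (algebraMap S (Matrix n n S)).comp f := by
    ext r : 1
    ext i j
    simp [Matrix.algebraMap_matrix_apply, apply_ite f]
  rw [hcomp]
  rfl

/-- Nonsingularity of the Sylvester solution under controllability of `(M, N)` and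
observability of `(Φ, Ψ)`. -/
theorem stmt_9 {r : ℕ} (hr : 0 < r) (Φ M : Matrix (Fin r) (Fin r) ℝ)
    (hdisj : ∀ z : ℂ, ¬(((Φ.map Complex.ofReal).charpoly).IsRoot z ∧
      ((M.map Complex.ofReal).charpoly).IsRoot z))
    (N : Matrix (Fin r) (Fin 1) ℝ) (Ψ : Matrix (Fin 1) (Fin r) ℝ)
    (hctrb : IsUnit (Matrix.of fun i j : Fin r => (M ^ (j : ℕ) * N) i 0))
    (hobs : IsUnit (Matrix.of fun i j : Fin r => (Ψ * Φ ^ (i : ℕ)) 0 j))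
    (T : Matrix (Fin r) (Fin r) ℝ) (hSyl : T * Φ - M * T = N * Ψ) :
    IsUnit T := by
  classical
  set q : Polynomial ℝ := Φ.charpoly with hq
  have hdeg : q.natDegree = r := by rw [hq, Φ.charpoly_natDegree_eq_dim, Fintype.card_fin]
  have hmonic : q.Monic := Φ.charpoly_monic
  -- Step 1: the iterated Sylvester identity
  have hstep : ∀ k : ℕ, T * Φ ^ k - M ^ k * T
      = ∑ i ∈ Finset.range k, M ^ i * (N * Ψ) * Φ ^ (k - 1 - i) := by
    intro k
    induction k with
    | zero => simp
    | succ k ih =>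
      have hexp : T * Φ ^ (k + 1) - M ^ (k + 1) * T
          = (T * Φ ^ k - M ^ k * T) * Φ + M ^ k * (T * Φ - M * T) := by
        rw [pow_succ, pow_succ]
        noncomm_ring
      rw [hexp, ih, hSyl, Finset.sum_mul, Finset.sum_range_succ]
      congr 1
      · apply Finset.sum_congr rfl
        intro i hi
        rw [Finset.mem_range] at hi
        have h1 : k + 1 - 1 - i = (k - 1 - i) + 1 := by omega
        rw [h1, pow_succ, ← mul_assoc]
      · have h2 : k + 1 - 1 - k = 0 := by omega
        rw [h2, pow_zero, mul_one]
  -- Step 2: sum against the coefficients of the characteristic polynomial of Φ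
  have key : T * Polynomial.aeval Φ q - Polynomial.aeval M q * T
      = ∑ i ∈ Finset.range r, ∑ j ∈ Finset.range r,
          q.coeff (i + j + 1) • (M ^ i * (N * Ψ) * Φ ^ j) := by
    have hlt : q.natDegree < r + 1 := by omega
    rw [Polynomial.aeval_eq_sum_range' hlt Φ, Polynomial.aeval_eq_sum_range' hlt M]
    rw [Finset.mul_sum, Finset.sum_mul, ← Finset.sum_sub_distrib]
    have hterm : ∀ k ∈ Finset.range (r + 1),
        T * q.coeff k • Φ ^ k - q.coeff k • M ^ k * T
          = ∑ i ∈ Finset.range k,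
              q.coeff (i + (k - 1 - i) + 1) • (M ^ i * (N * Ψ) * Φ ^ (k - 1 - i)) := by
      intro k hk
      rw [mul_smul_comm, smul_mul_assoc, ← smul_sub, hstep k, Finset.smul_sum]
      apply Finset.sum_congr rfl
      intro i hi
      rw [Finset.mem_range] at hi
      congr 2
      omega
    rw [Finset.sum_congr rfl hterm]
    exact aux_reindex r (fun i j => q.coeff (i + j + 1) • (M ^ i * (N * Ψ) * Φ ^ j))
      (fun i j h => by
        have hc : q.coeff (i + j + 1) = 0 :=
          Polynomial.coeff_eq_zero_of_natDegree_lt (by rw [hdeg]; exact h)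
        simp [hc])
  -- Step 3: the double sum is the product of the three structured matrices
  have hprod : (Matrix.of fun i j : Fin r => (M ^ (j : ℕ) * N) i 0)
        * (Matrix.of fun i j : Fin r => q.coeff ((i : ℕ) + (j : ℕ) + 1))
        * (Matrix.of fun i j : Fin r => (Ψ * Φ ^ (i : ℕ)) 0 j)
      = ∑ i ∈ Finset.range r, ∑ j ∈ Finset.range r,
          q.coeff (i + j + 1) • (M ^ i * (N * Ψ) * Φ ^ j) := by
    have hentry : ∀ (i j : ℕ) (a b : Fin r),
        (M ^ i * (N * Ψ) * Φ ^ j) a b = (M ^ i * N) a 0 * (Ψ * Φ ^ j) 0 b := by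
      intro i j a b
      have h1 : M ^ i * (N * Ψ) * Φ ^ j = (M ^ i * N) * (Ψ * Φ ^ j) := by
        rw [Matrix.mul_assoc, Matrix.mul_assoc, Matrix.mul_assoc]
      rw [h1, Matrix.mul_apply, Fin.sum_univ_one]
    ext a b
    rw [Matrix.mul_apply]
    have hCH : ∀ x : Fin r,
        ((Matrix.of fun i j : Fin r => (M ^ (j : ℕ) * N) i 0)
          * (Matrix.of fun i j : Fin r => q.coeff ((i : ℕ) + (j : ℕ) + 1))) a x
        = ∑ y : Fin r, (M ^ (y : ℕ) * N) a 0 * q.coeff ((y : ℕ) + (x : ℕ) + 1) := by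
      intro x
      rw [Matrix.mul_apply]
      rfl
    simp only [hCH, Matrix.of_apply, Matrix.sum_apply, Matrix.smul_apply, smul_eq_mul, hentry,
      Finset.sum_mul]
    rw [Finset.sum_comm]
    rw [← Fin.sum_univ_eq_sum_range (fun i => ∑ j ∈ Finset.range r,
      q.coeff (i + j + 1) * ((M ^ i * N) a 0 * (Ψ * Φ ^ j) 0 b)) r]
    apply Finset.sum_congr rfl
    intro y _
    rw [← Fin.sum_univ_eq_sum_range (fun j =>
      q.coeff ((y : ℕ) + j + 1) * ((M ^ (y : ℕ) * N) a 0 * (Ψ * Φ ^ j) 0 b)) r]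
    apply Finset.sum_congr rfl
    intro x _
    ring
  -- Step 4: the Hankel matrix of coefficients is invertible
  have hH : IsUnit (Matrix.of fun i j : Fin r => q.coeff ((i : ℕ) + (j : ℕ) + 1)) := by
    rw [Matrix.isUnit_iff_isUnit_det]
    have hsub : (Matrix.of fun i j : Fin r => q.coeff ((i : ℕ) + (j : ℕ) + 1))
        = (Matrix.of fun i j : Fin r =>
            q.coeff ((i : ℕ) + ((Fin.rev j : Fin r) : ℕ) + 1)).submatrix id ⇑Fin.revPerm := by
      ext i j
      simp only [Matrix.submatrix_apply, id_eq, Matrix.of_apply, Fin.revPerm_apply, Fin.rev_rev]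
    rw [hsub, Matrix.det_permute']
    have htri : (Matrix.of fun i j : Fin r =>
        q.coeff ((i : ℕ) + ((Fin.rev j : Fin r) : ℕ) + 1)).BlockTriangular id := by
      intro i j hij
      simp only [id_eq] at hij
      have hj : ((Fin.rev j : Fin r) : ℕ) = r - 1 - (j : ℕ) := by
        simp [Fin.val_rev]; omega
      have hlt : r < (i : ℕ) + ((Fin.rev j : Fin r) : ℕ) + 1 := by
        have h1 : (j : ℕ) < (i : ℕ) := hij
        have := j.isLt; have := i.isLt
        omega
      show q.coeff ((i : ℕ) + ((Fin.rev j : Fin r) : ℕ) + 1) = 0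
      exact Polynomial.coeff_eq_zero_of_natDegree_lt (p := q) (by rw [hdeg]; exact hlt)
    rw [Matrix.det_of_upperTriangular htri]
    have hdiag : ∀ i : Fin r, (Matrix.of fun i j : Fin r =>
        q.coeff ((i : ℕ) + ((Fin.rev j : Fin r) : ℕ) + 1)) i i = 1 := by
      intro i
      have hi : (i : ℕ) + ((Fin.rev i : Fin r) : ℕ) + 1 = r := by
        have := i.isLt
        simp [Fin.val_rev]
        omega
      simp only [Matrix.of_apply, hi]
      rw [← hdeg]
      exact hmonic.coeff_natDegree
    rw [Finset.prod_congr rfl fun i _ => hdiag i]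
    simp only [Finset.prod_const_one, mul_one]
    rcases Int.units_eq_one_or (Equiv.Perm.sign (Fin.revPerm : Equiv.Perm (Fin r))) with h | h <;>
      simp [h]
  -- Step 5: conclude, using Cayley–Hamilton
  have h0 : T * Polynomial.aeval Φ q = 0 := by
    rw [hq, Matrix.aeval_self_charpoly, mul_zero]
  have hfinal : Polynomial.aeval M q * T
      = -((Matrix.of fun i j : Fin r => (M ^ (j : ℕ) * N) i 0)
        * (Matrix.of fun i j : Fin r => q.coeff ((i : ℕ) + (j : ℕ) + 1))
        * (Matrix.of fun i j : Fin r => (Ψ * Φ ^ (i : ℕ)) 0 j)) := by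
    rw [hprod, ← key, h0, zero_sub, neg_neg]
  have hUnitProd : IsUnit (Polynomial.aeval M q * T) := by
    rw [hfinal]
    exact ((hctrb.mul hH).mul hobs).neg
  have hdetT : IsUnit ((Polynomial.aeval M q).det * T.det) := by
    rw [← Matrix.det_mul]
    exact (Matrix.isUnit_iff_isUnit_det _).1 hUnitProd
  exact (Matrix.isUnit_iff_isUnit_det T).2 (isUnit_of_mul_isUnit_right hdetT)
end

section
/- (PE adaptation lemma, Lemma 4.1 of Liu–Zhang–Jiang used in the proof of Theorem 2.) Let w: [0,∞) → ℝ^m be continuous, bounded, and persistently exciting. Let g: [0,∞) → ℝ^m be differentiable with lim_{t→∞} dg/dt = 0 and lim_{t→∞} w(t)ᵀ g(t) = 0. Then lim_{t→∞} g(t) = 0. -/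
open Matrix Filter Topology Set

/-- A (locally integrable) function `f : [0,∞) → ℝ^m` is persistently exciting (PE) if there
exist `t₀ ≥ 0` and `T₀, ϑ > 0` such that `(1/T₀)∫_t^{t+T₀} |cᵀ f(s)| ds ≥ ϑ` for every
`t ≥ t₀` and every unit vector `c`. -/
def IsPE {ι : Type*} [Fintype ι] (f : ℝ → ι → ℝ) : Prop :=
  ∃ t₀ ≥ (0:ℝ), ∃ T₀ > (0:ℝ), ∃ ϑ > (0:ℝ), ∀ t ≥ t₀, ∀ c : ι → ℝ,
    (∑ i, c i ^ 2 = 1) → ϑ ≤ (1 / T₀) * ∫ s in t..(t + T₀), |∑ i, c i * f s i|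

/-- PE adaptation lemma (Lemma 4.1 of Liu–Zhang–Jiang): if `w` is continuous, bounded and PE,
`g` is differentiable with `dg/dt → 0` and `wᵀ g → 0`, then `g → 0`. -/
theorem stmt_11 {m : ℕ} (hm : 0 < m) (w g g' : ℝ → Fin m → ℝ)
    (hwc : ContinuousOn w (Ici 0)) (hwb : ∃ c : ℝ, ∀ t ≥ (0:ℝ), ‖w t‖ ≤ c)
    (hwPE : IsPE w)
    (hg : ∀ t ≥ (0:ℝ), HasDerivWithinAt g (g' t) (Ici 0) t)
    (hg'0 : Tendsto g' atTop (𝓝 0))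
    (hwg : Tendsto (fun t => ∑ i, w t i * g t i) atTop (𝓝 0)) :
    Tendsto g atTop (𝓝 0) := by
  obtain ⟨t₀, ht₀, T₀, hT₀, ϑ, hϑ, hPE⟩ := hwPE
  obtain ⟨c₀, hc₀⟩ := hwb
  set C : ℝ := max c₀ 1 with hCdef
  have hC1 : (1:ℝ) ≤ C := le_max_right _ _
  have hCpos : (0:ℝ) < C := lt_of_lt_of_le one_pos hC1
  have hwbC : ∀ t ≥ (0:ℝ), ∀ i, |w t i| ≤ C := by
    intro t ht i
    calc |w t i| ≤ ‖w t‖ := by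
          rw [← Real.norm_eq_abs]; exact norm_le_pi_norm (w t) i
      _ ≤ c₀ := hc₀ t ht
      _ ≤ C := le_max_left _ _
  set N : ℝ → ℝ := fun t => Real.sqrt (∑ i, g t i ^ 2) with hNdef
  have hNnonneg : ∀ t, 0 ≤ N t := fun t => Real.sqrt_nonneg _
  have hNsq : ∀ t, N t ^ 2 = ∑ i, g t i ^ 2 := fun t =>
    Real.sq_sqrt (Finset.sum_nonneg fun i _ => sq_nonneg _)
  have habs : ∀ t i, |g t i| ≤ N t := by
    intro t i
    have h1 : g t i ^ 2 ≤ ∑ j, g t j ^ 2 :=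
      Finset.single_le_sum (f := fun j => g t j ^ 2) (fun j _ => sq_nonneg _) (Finset.mem_univ i)
    calc |g t i| = Real.sqrt (g t i ^ 2) := (Real.sqrt_sq_eq_abs _).symm
      _ ≤ N t := Real.sqrt_le_sqrt h1
  -- main estimate
  have key : ∀ ε > (0:ℝ), ∀ᶠ t in atTop, N t ≤ ε := by
    intro ε hε
    have hmCT : (0:ℝ) < (m:ℝ) * C * T₀ := by positivity
    set δ : ℝ := ε * ϑ / (2 * ((m:ℝ) * C * T₀)) with hδdef
    have hδpos : 0 < δ := by positivity
    set η : ℝ := ε * ϑ / 2 with hηdef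
    have hηpos : 0 < η := by positivity
    have h1 : ∀ᶠ s in atTop, ‖g' s‖ ≤ δ := by
      filter_upwards [NormedAddCommGroup.tendsto_nhds_zero.mp hg'0 δ hδpos] with s hs
      exact hs.le
    have h2 : ∀ᶠ s in atTop, |∑ i, w s i * g s i| ≤ η := by
      have := NormedAddCommGroup.tendsto_nhds_zero.mp hwg η hηpos
      filter_upwards [this] with s hs
      simpa using hs.le
    obtain ⟨T₁, hT₁⟩ := eventually_atTop.mp (h1.and h2)
    rw [eventually_atTop]
    refine ⟨max T₁ (max t₀ 0), fun t ht => ?_⟩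
    have htT₁ : T₁ ≤ t := le_trans (le_max_left _ _) ht
    have htt₀ : t₀ ≤ t := le_trans (le_trans (le_max_left _ _) (le_max_right _ _)) ht
    have ht0 : (0:ℝ) ≤ t := le_trans (le_trans (le_max_right _ _) (le_max_right _ _)) ht
    rcases eq_or_lt_of_le (hNnonneg t) with hN0 | hNpos
    · rw [← hN0]; exact hε.le
    -- unit vector
    set c : Fin m → ℝ := fun i => g t i / N t with hcdef
    have hcunit : ∑ i, c i ^ 2 = 1 := by
      simp only [hcdef, div_pow, ← Finset.sum_div]
      rw [← hNsq t]
      exact div_self (pow_ne_zero _ (ne_of_gt hNpos))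
    have hIcc : Icc t (t + T₀) ⊆ Ici (0:ℝ) := fun x hx => le_trans ht0 hx.1
    -- g nearly constant on [t, t+T₀]
    have hgclose : ∀ s ∈ Icc t (t + T₀), ‖g s - g t‖ ≤ δ * T₀ := by
      intro s hs
      have hmvt : ‖g s - g t‖ ≤ δ * ‖s - t‖ := by
        apply Convex.norm_image_sub_le_of_norm_hasDerivWithin_le
          (f' := g') (s := Icc t (t + T₀))
        · intro x hx
          exact (hg x (hIcc hx)).mono hIcc
        · intro x hx
          exact (hT₁ x (le_trans htT₁ hx.1)).1
        · exact convex_Icc _ _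
        · exact ⟨le_refl t, by linarith [hT₀.le]⟩
        · exact hs
      have : ‖s - t‖ ≤ T₀ := by
        rw [Real.norm_eq_abs, abs_of_nonneg (by linarith [hs.1])]
        linarith [hs.2]
      calc ‖g s - g t‖ ≤ δ * ‖s - t‖ := hmvt
        _ ≤ δ * T₀ := by nlinarith [hδpos.le]
    -- pointwise bound on the integrand
    have hpt : ∀ s ∈ Icc t (t + T₀), |∑ i, c i * w s i| ≤ ε * ϑ / N t := by
      intro s hs
      have hs0 : (0:ℝ) ≤ s := hIcc hs
      have hsplit : ∑ i, g t i * w s i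
          = (∑ i, w s i * g s i) + ∑ i, w s i * (g t i - g s i) := by
        rw [← Finset.sum_add_distrib]
        exact Finset.sum_congr rfl fun i _ => by ring
      have hterm : |∑ i, w s i * (g t i - g s i)| ≤ (m:ℝ) * C * (δ * T₀) := by
        calc |∑ i, w s i * (g t i - g s i)| ≤ ∑ i, |w s i * (g t i - g s i)| :=
              Finset.abs_sum_le_sum_abs _ _
          _ ≤ ∑ _i : Fin m, C * (δ * T₀) := by
              apply Finset.sum_le_sum
              intro i _
              rw [abs_mul]
              have h1 : |w s i| ≤ C := hwbC s hs0 i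
              have h2 : |g t i - g s i| ≤ δ * T₀ := by
                have : |g t i - g s i| ≤ ‖g t - g s‖ := by
                  rw [← Real.norm_eq_abs]
                  exact norm_le_pi_norm (g t - g s) i
                calc |g t i - g s i| ≤ ‖g t - g s‖ := this
                  _ = ‖g s - g t‖ := by rw [norm_sub_rev]
                  _ ≤ δ * T₀ := hgclose s hs
              exact mul_le_mul h1 h2 (abs_nonneg _) hCpos.le
          _ = (m:ℝ) * C * (δ * T₀) := by
              rw [Finset.sum_const, Finset.card_univ, Fintype.card_fin, nsmul_eq_mul]
              ring
      have hnum : |∑ i, g t i * w s i| ≤ ε * ϑ := by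
        have hδT : (m:ℝ) * C * (δ * T₀) = ε * ϑ / 2 := by
          rw [hδdef]; field_simp
        calc |∑ i, g t i * w s i|
            ≤ |∑ i, w s i * g s i| + |∑ i, w s i * (g t i - g s i)| := by
              rw [hsplit]; exact abs_add_le _ _
          _ ≤ η + (m:ℝ) * C * (δ * T₀) :=
              add_le_add (hT₁ s (le_trans htT₁ hs.1)).2 hterm
          _ = ε * ϑ := by rw [hδT, hηdef]; ring
      have hceq : ∑ i, c i * w s i = (∑ i, g t i * w s i) / N t := by
        rw [Finset.sum_div]
        exact Finset.sum_congr rfl fun i _ => by rw [hcdef]; ring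
      rw [hceq, abs_div, abs_of_pos hNpos]
      gcongr
    -- integrability of the integrand
    have hcont : ContinuousOn (fun s => |∑ i, c i * w s i|) (Icc t (t + T₀)) := by
      apply ContinuousOn.abs
      apply continuousOn_finset_sum
      intro i _
      exact continuousOn_const.mul ((continuous_apply i).comp_continuousOn (hwc.mono hIcc))
    have hle : t ≤ t + T₀ := by linarith
    have hint : IntervalIntegrable (fun s => |∑ i, c i * w s i|) MeasureTheory.volume t (t + T₀) := by
      apply ContinuousOn.intervalIntegrable
      rwa [uIcc_of_le hle]
    have hintmono : (∫ s in t..(t + T₀), |∑ i, c i * w s i|)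
        ≤ ∫ _s in t..(t + T₀), ε * ϑ / N t := by
      apply intervalIntegral.integral_mono_on hle hint intervalIntegrable_const
      exact hpt
    have hconst : (∫ _s in t..(t + T₀), ε * ϑ / N t) = T₀ * (ε * ϑ / N t) := by
      rw [intervalIntegral.integral_const, smul_eq_mul]
      ring_nf
    have hfinal : ϑ ≤ ε * ϑ / N t := by
      have h := hPE t htt₀ c hcunit
      calc ϑ ≤ (1 / T₀) * ∫ s in t..(t + T₀), |∑ i, c i * w s i| := h
        _ ≤ (1 / T₀) * (T₀ * (ε * ϑ / N t)) := by
            rw [← hconst]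
            apply mul_le_mul_of_nonneg_left hintmono
            positivity
        _ = ε * ϑ / N t := by field_simp
    -- conclude N t ≤ ε
    have : ϑ * N t ≤ ε * ϑ := by
      rw [div_eq_mul_inv] at hfinal
      calc ϑ * N t ≤ (ε * ϑ * (N t)⁻¹) * N t := by nlinarith [hNpos]
        _ = ε * ϑ := by field_simp
    nlinarith [hϑ]
  -- conclude Tendsto from key
  have hNto : Tendsto N atTop (𝓝 0) := by
    rw [Metric.tendsto_atTop]
    intro ε hε
    obtain ⟨T, hT⟩ := eventually_atTop.mp (key (ε / 2) (by linarith))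
    refine ⟨T, fun t ht => ?_⟩
    rw [Real.dist_eq, sub_zero, abs_of_nonneg (hNnonneg t)]
    linarith [hT t ht]
  have hnorm : Tendsto (fun t => ‖g t‖) atTop (𝓝 0) := by
    apply squeeze_zero (fun t => norm_nonneg _) _ hNto
    intro t
    rw [pi_norm_le_iff_of_nonneg (hNnonneg t)]
    intro i
    rw [Real.norm_eq_abs]
    exact habs t i
  rw [← tendsto_zero_iff_norm_tendsto_zero] at hnorm
  exact hnorm
end
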